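/- The complete planar 3-tree T_d has outerplane splitting number at least (2 n_d − 8)/3, where n_d = |V(T_d)| = (3^{d+1}+5)/2. -/

import Mathlib

open Classical

/-- An abstract model of a plane (planar embedded) graph: a finite vertex set,
a finite face set with a distinguished outer face, the underlying graph,
a vertex-face boundary incidence relation, and a face adjacency relation
(two faces sharing an edge). -/
structure PlaneGraph where
  verts : Finset ℕ
  faces : Finset ℕ
  outer : ℕ
  graph : SimpleGraph ℕ
  inc : ℕ → ℕ → Prop
  dualAdj : ℕ → ℕ → Prop
  outer_mem : outer ∈ faces

namespace PlaneGraph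

/-- A plane graph is outerplane if every vertex lies on the outer face. -/
def Outerplane (G : PlaneGraph) : Prop := ∀ v ∈ G.verts, G.inc v G.outer

/-- Biconnectivity: at least 3 vertices and removing any vertex leaves it connected. -/
def Biconnected (G : PlaneGraph) : Prop :=
  3 ≤ G.verts.card ∧
  ∀ v, (G.graph.induce {u | u ∈ G.verts ∧ u ≠ v}).Connected

/-- The dual graph of a plane graph, as a simple graph on the face names. -/
def dual (G : PlaneGraph) : SimpleGraph ℕ where
  Adj f g := f ≠ g ∧ f ∈ G.faces ∧ g ∈ G.faces ∧ (G.dualAdj f g ∨ G.dualAdj g f)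
  symm := by constructor; intro f g h; tauto
  loopless := by constructor; intro f h; tauto

/-- The face-vertex incidence graph, on `ℕ ⊕ ℕ` (left = vertices, right = faces). -/
def fvi (G : PlaneGraph) : SimpleGraph (ℕ ⊕ ℕ) where
  Adj x y :=
    (∃ v f, x = Sum.inl v ∧ y = Sum.inr f ∧ v ∈ G.verts ∧ f ∈ G.faces ∧ G.inc v f) ∨
    (∃ v f, y = Sum.inl v ∧ x = Sum.inr f ∧ v ∈ G.verts ∧ f ∈ G.faces ∧ G.inc v f)
  symm := by
    constructor
    rintro x y (⟨v, f, h1, h2, h3⟩ | ⟨v, f, h1, h2, h3⟩)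
    · exact Or.inr ⟨v, f, h1, h2, h3⟩
    · exact Or.inl ⟨v, f, h1, h2, h3⟩
  loopless := by
    constructor
    rintro x (⟨v, f, h1, h2, _⟩ | ⟨v, f, h1, h2, _⟩) <;> subst h1 <;> simp_all

/-- A face cover: a set of faces such that every vertex lies on some face of it. -/
def FaceCover (G : PlaneGraph) (S : Finset ℕ) : Prop :=
  S ⊆ G.faces ∧ ∀ v ∈ G.verts, ∃ f ∈ S, G.inc v f

/-- The vertex set `V(G) ∪ S` inside the face-vertex incidence graph. -/
def coverSet (G : PlaneGraph) (S : Finset ℕ) : Set (ℕ ⊕ ℕ) :=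
  {x | (∃ v ∈ G.verts, x = Sum.inl v) ∨ (∃ f ∈ S, x = Sum.inr f)}

/-- A connected face cover: the subgraph of the face-vertex incidence graph
induced by `S ∪ V(G)` is connected. -/
def ConnectedFaceCover (G : PlaneGraph) (S : Finset ℕ) : Prop :=
  G.FaceCover S ∧ ((G.fvi).induce (G.coverSet S)).Connected

/-- A feedback vertex set in the dual: removing these faces leaves the dual acyclic. -/
def FVS (G : PlaneGraph) (S : Finset ℕ) : Prop :=
  S ⊆ G.faces ∧ (G.dual.induce {f | f ∈ G.faces ∧ f ∉ S}).IsAcyclic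

/-- An embedding-preserving vertex split: a vertex `v` incident to two distinct
faces `f₁, f₂` is split into `v` and a fresh copy `v'`, merging `f₁` and `f₂`
into a new face `f`; everything else is preserved. -/
def IsSplit (G G' : PlaneGraph) : Prop :=
  ∃ v v' f₁ f₂ f, v ∈ G.verts ∧ v' ∉ G.verts ∧
    f₁ ∈ G.faces ∧ f₂ ∈ G.faces ∧ f₁ ≠ f₂ ∧ G.inc v f₁ ∧ G.inc v f₂ ∧
    f ∉ (G.faces.erase f₁).erase f₂ ∧
    G'.verts = insert v' G.verts ∧
    G'.faces = insert f ((G.faces.erase f₁).erase f₂) ∧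
    ((G.outer = f₁ ∨ G.outer = f₂) → G'.outer = f) ∧
    ((G.outer ≠ f₁ ∧ G.outer ≠ f₂) → G'.outer = G.outer) ∧
    (∀ u ∈ G.verts, ∀ g ∈ (G.faces.erase f₁).erase f₂, (G'.inc u g ↔ G.inc u g)) ∧
    (∀ u ∈ G.verts, (G'.inc u f ↔ (G.inc u f₁ ∨ G.inc u f₂))) ∧
    (∀ a b, a ∈ G.verts → b ∈ G.verts → a ≠ v → b ≠ v →
      (G'.graph.Adj a b ↔ G.graph.Adj a b)) ∧
    (∀ u, G.graph.Adj v u → (G'.graph.Adj v u ∨ G'.graph.Adj v' u))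

/-- `SplitSeq k G G'` : `G'` is obtained from `G` by `k` embedding-preserving splits. -/
def SplitSeq : ℕ → PlaneGraph → PlaneGraph → Prop
  | 0, G, G' => G = G'
  | k + 1, G, G' => ∃ H, IsSplit G H ∧ SplitSeq k H G'

/-- The outerplane splitting number: `k` is the least number of splits
turning `G` into an outerplane graph. -/
def OSN (G : PlaneGraph) (k : ℕ) : Prop :=
  IsLeast {m | ∃ G', SplitSeq m G G' ∧ G'.Outerplane} k

/-- A maximal planar graph (plane triangulation): biconnected, all faces
triangles, and exactly `2n - 4` faces. -/
def MaximalPlanar (G : PlaneGraph) : Prop :=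
  G.Biconnected ∧ (∀ f ∈ G.faces, {v | v ∈ G.verts ∧ G.inc v f}.ncard = 3) ∧
  G.faces.card = 2 * G.verts.card - 4

/-- Minimum degree at least `d`. -/
def minDegreeGE (G : PlaneGraph) (d : ℕ) : Prop :=
  ∀ v ∈ G.verts, d ≤ {u | G.graph.Adj v u}.ncard

/-- Cubic: every vertex has degree exactly 3. -/
def Cubic (G : PlaneGraph) : Prop :=
  ∀ v ∈ G.verts, {u | G.graph.Adj v u}.ncard = 3

def VertexCover (G : PlaneGraph) (C : Finset ℕ) : Prop :=
  C ⊆ G.verts ∧ ∀ u v, G.graph.Adj u v → u ∈ C ∨ v ∈ C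

/-- `D` is a plane embedding of the dual of `G`: its vertices are the faces of
`G`, its faces are the vertices of `G`, its adjacency is dual adjacency, and the
face of `D` for a vertex `v` of `G` is bounded by exactly the faces of `G` containing `v`. -/
def IsDual (G D : PlaneGraph) : Prop :=
  D.verts = G.faces ∧ D.faces = G.verts ∧
  (∀ f g, D.graph.Adj f g ↔ G.dual.Adj f g) ∧
  (∀ f v, D.inc f v ↔ (v ∈ G.verts ∧ f ∈ G.faces ∧ G.inc v f))

/-- `G'` is the all-1-subdivision of `G`: each edge `uv` is replaced by a path
through a fresh vertex `sub u v`; faces are unchanged, each subdivision vertex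
lies on exactly two faces, both of which contain both original endpoints. -/
def AllOneSub (G G' : PlaneGraph) : Prop :=
  ∃ sub : ℕ → ℕ → ℕ,
    (∀ u v, sub u v = sub v u) ∧
    (∀ u v, G.graph.Adj u v → sub u v ∉ G.verts) ∧
    (∀ u v a b, G.graph.Adj u v → G.graph.Adj a b → sub u v = sub a b →
      ((u = a ∧ v = b) ∨ (u = b ∧ v = a))) ∧
    (∀ x, x ∈ G'.verts ↔ (x ∈ G.verts ∨ ∃ u v, G.graph.Adj u v ∧ x = sub u v)) ∧
    (∀ x y, G'.graph.Adj x y ↔ ∃ u v, G.graph.Adj u v ∧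
      ((x = u ∧ y = sub u v) ∨ (y = u ∧ x = sub u v))) ∧
    G'.faces = G.faces ∧ G'.outer = G.outer ∧
    (∀ u ∈ G.verts, ∀ f, (G'.inc u f ↔ G.inc u f)) ∧
    (∀ u v, G.graph.Adj u v → ∀ f, G'.inc (sub u v) f →
      (f ∈ G.faces ∧ G.inc u f ∧ G.inc v f)) ∧
    (∀ u v, G.graph.Adj u v → {f | f ∈ G.faces ∧ G'.inc (sub u v) f}.ncard = 2)

/-- The plane `K₄`. -/
def IsK4Plane (G : PlaneGraph) : Prop :=
  G.verts.card = 4 ∧ G.faces.card = 4 ∧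
  (∀ u ∈ G.verts, ∀ v ∈ G.verts, u ≠ v → G.graph.Adj u v) ∧
  (∀ f ∈ G.faces, {v | v ∈ G.verts ∧ G.inc v f}.ncard = 3)

/-- `G` is obtained from `H` by inserting a new vertex `nv f` inside every inner
face `f` of `H`, joining it to the three boundary vertices and replacing `f`
by the three faces `nf f`. -/
def StellateAll (H G : PlaneGraph) : Prop :=
  ∃ (nv : ℕ → ℕ) (nf : ℕ → Finset ℕ),
    Set.InjOn nv ↑(H.faces.erase H.outer) ∧
    (∀ f ∈ H.faces.erase H.outer, nv f ∉ H.verts) ∧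
    G.verts = H.verts ∪ (H.faces.erase H.outer).image nv ∧
    (∀ f ∈ H.faces.erase H.outer, (nf f).card = 3) ∧
    (∀ f ∈ H.faces.erase H.outer, ∀ g ∈ H.faces.erase H.outer, f ≠ g →
      Disjoint (nf f) (nf g)) ∧
    (∀ f ∈ H.faces.erase H.outer, H.outer ∉ nf f) ∧
    G.faces = insert H.outer ((H.faces.erase H.outer).biUnion nf) ∧
    G.outer = H.outer ∧
    (∀ v, G.inc v G.outer ↔ (v ∈ H.verts ∧ H.inc v H.outer)) ∧
    (∀ f ∈ H.faces.erase H.outer, ∀ g ∈ nf f,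
      (G.inc (nv f) g ∧ ∀ v, G.inc v g → (v = nv f ∨ (v ∈ H.verts ∧ H.inc v f)))) ∧
    (∀ f ∈ H.faces.erase H.outer, ∀ v ∈ H.verts, H.inc v f → ∃ g ∈ nf f, G.inc v g) ∧
    (∀ f ∈ H.faces.erase H.outer, ∀ g, G.inc (nv f) g → g ∈ nf f) ∧
    (∀ f ∈ H.faces.erase H.outer, ∀ u, (G.graph.Adj (nv f) u ↔ (u ∈ H.verts ∧ H.inc u f))) ∧
    (∀ a b, a ∈ H.verts → b ∈ H.verts → (G.graph.Adj a b ↔ H.graph.Adj a b))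

/-- The complete planar 3-tree of depth `d`. -/
def IsCP3Tree : ℕ → PlaneGraph → Prop
  | 0, G => IsK4Plane G
  | d + 1, G => ∃ H, IsCP3Tree d H ∧ StellateAll H G

end PlaneGraph

/-!
Undoing the splits one at a time turns the outer face of the final outerplane graph into a
face cover of `T_d` with at most `k + 1` faces: a split merges two faces `f₁, f₂` into `f`, and
replacing `f` by `f₁, f₂` costs one face. Conversely, the `3^d` vertices created by the last
stellation lie on pairwise disjoint sets of faces, so every face cover of `T_d` has at least
`3^d` faces, while `2 n_d = 3^(d+1) + 5`.
-/

namespace PlaneGraph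

theorem FaceCover.nonempty {G : PlaneGraph} {S : Finset ℕ} (hS : G.FaceCover S)
    (hV : G.verts.Nonempty) : S.Nonempty := by
  obtain ⟨v, hv⟩ := hV
  obtain ⟨f, hf, -⟩ := hS.2 v hv
  exact ⟨f, hf⟩

theorem Outerplane.faceCover_singleton_outer {G : PlaneGraph} (h : G.Outerplane) :
    G.FaceCover {G.outer} :=
  ⟨Finset.singleton_subset_iff.mpr G.outer_mem,
    fun v hv => ⟨G.outer, Finset.mem_singleton_self _, h v hv⟩⟩

theorem IsSplit.exists_faceCover {G H : PlaneGraph} (h : IsSplit G H) {S : Finset ℕ}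
    (hS : H.FaceCover S) : ∃ T : Finset ℕ, G.FaceCover T ∧ T.card ≤ S.card + 1 := by
  obtain ⟨v, v', f₁, f₂, f, -, -, hf₁, hf₂, -, -, -, -, hverts, hfaces, -, -,
    hinc_old, hinc_new, -⟩ := h
  have hold : ∀ g ∈ S, g ≠ f → g ∈ (G.faces.erase f₁).erase f₂ := fun g hg hgf => by
    have := hS.1 hg
    rw [hfaces, Finset.mem_insert] at this
    exact this.resolve_left hgf
  have hcover : ∀ T : Finset ℕ, S.erase f ⊆ T → T ⊆ insert f₁ (insert f₂ (S.erase f)) →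
      (f ∈ S → f₁ ∈ T ∧ f₂ ∈ T) → G.FaceCover T := by
    intro T hlow hup hsplit
    refine ⟨fun g hg => ?_, fun u hu => ?_⟩
    · rcases Finset.mem_insert.mp (hup hg) with rfl | hg
      · exact hf₁
      rcases Finset.mem_insert.mp hg with rfl | hg
      · exact hf₂
      obtain ⟨hgf, hgS⟩ := Finset.mem_erase.mp hg
      exact Finset.mem_of_mem_erase (Finset.mem_of_mem_erase (hold g hgS hgf))
    · obtain ⟨g, hgS, hug⟩ := hS.2 u (hverts ▸ Finset.mem_insert_of_mem hu)
      by_cases hgf : g = f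
      · subst hgf
        rcases (hinc_new u hu).mp hug with h₁ | h₂
        · exact ⟨f₁, (hsplit hgS).1, h₁⟩
        · exact ⟨f₂, (hsplit hgS).2, h₂⟩
      · exact ⟨g, hlow (Finset.mem_erase.mpr ⟨hgf, hgS⟩),
          (hinc_old u hu g (hold g hgS hgf)).mp hug⟩
  by_cases hfS : f ∈ S
  · refine ⟨insert f₁ (insert f₂ (S.erase f)), hcover _ ?_ le_rfl ?_, ?_⟩
    · exact (Finset.subset_insert _ _).trans (Finset.subset_insert _ _)
    · exact fun _ => ⟨Finset.mem_insert_self _ _,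
        Finset.mem_insert_of_mem (Finset.mem_insert_self _ _)⟩
    · calc (insert f₁ (insert f₂ (S.erase f))).card
          ≤ (S.erase f).card + 1 + 1 :=
            (Finset.card_insert_le _ _).trans (Nat.succ_le_succ (Finset.card_insert_le _ _))
        _ = S.card + 1 := by rw [Finset.card_erase_add_one hfS]
  · refine ⟨S.erase f, hcover _ le_rfl ?_ (fun h => absurd h hfS), ?_⟩
    · exact (Finset.subset_insert _ _).trans (Finset.subset_insert _ _)
    · exact (Finset.card_erase_le).trans (Nat.le_succ _)

theorem SplitSeq.exists_faceCover {m : ℕ} {G G' : PlaneGraph} (h : SplitSeq m G G')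
    (hG' : G'.Outerplane) : ∃ S : Finset ℕ, G.FaceCover S ∧ S.card ≤ m + 1 := by
  induction m generalizing G with
  | zero =>
    subst h
    exact ⟨{G.outer}, hG'.faceCover_singleton_outer, by simp⟩
  | succ m ih =>
    obtain ⟨H, hsplit, hseq⟩ := h
    obtain ⟨S, hS, hcard⟩ := ih hseq
    obtain ⟨T, hT, hTcard⟩ := hsplit.exists_faceCover hS
    exact ⟨T, hT, by omega⟩

theorem OSN.exists_faceCover {G : PlaneGraph} {k : ℕ} (h : G.OSN k) :
    ∃ S : Finset ℕ, G.FaceCover S ∧ S.card ≤ k + 1 :=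
  let ⟨_, hseq, hout⟩ := h.1
  hseq.exists_faceCover hout

namespace StellateAll

variable {H G : PlaneGraph}

theorem card_inner_faces (h : StellateAll H G) :
    (G.faces.erase G.outer).card = 3 * (H.faces.erase H.outer).card := by
  obtain ⟨-, nf, -, -, -, hcard, hdisj, hout_nf, hfaces, hout, -⟩ := h
  have hout_biUnion : H.outer ∉ (H.faces.erase H.outer).biUnion nf := by
    simpa only [Finset.mem_biUnion, not_exists, not_and] using hout_nf
  rw [hfaces, hout, Finset.erase_insert hout_biUnion, Finset.card_biUnion hdisj,
    Finset.sum_congr rfl hcard, Finset.sum_const, smul_eq_mul, mul_comm]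

theorem card_verts (h : StellateAll H G) :
    G.verts.card = H.verts.card + (H.faces.erase H.outer).card := by
  obtain ⟨nv, -, hinj, hnew, hverts, -⟩ := h
  have hdisj : Disjoint H.verts ((H.faces.erase H.outer).image nv) := by
    simpa only [Finset.disjoint_right, Finset.mem_image, forall_exists_index, and_imp,
      forall_apply_eq_imp_iff₂] using hnew
  rw [hverts, Finset.card_union_of_disjoint hdisj, Finset.card_image_of_injOn hinj]

theorem card_inner_faces_le_of_faceCover (h : StellateAll H G) {S : Finset ℕ}
    (hS : G.FaceCover S) : (H.faces.erase H.outer).card ≤ S.card := by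
  obtain ⟨nv, nf, -, -, hverts, -, hdisj, -, -, -, -, -, -, hnv_inc, -⟩ := h
  have hpick : ∀ f ∈ H.faces.erase H.outer, ∃ g ∈ S, g ∈ nf f := fun f hf => by
    have hv : nv f ∈ G.verts := hverts ▸ Finset.mem_union_right _ (Finset.mem_image_of_mem nv hf)
    obtain ⟨g, hgS, hg⟩ := hS.2 (nv f) hv
    exact ⟨g, hgS, hnv_inc f hf g hg⟩
  choose! φ hφS hφ using hpick
  refine Finset.card_le_card_of_injOn φ hφS fun f hf f' hf' hff' => ?_
  by_contra hne
  exact Finset.disjoint_left.mp (hdisj f hf f' hf' hne) (hφ f hf) (hff' ▸ hφ f' hf')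

end StellateAll

namespace IsCP3Tree

theorem card_inner_faces {d : ℕ} {G : PlaneGraph} (h : IsCP3Tree d G) :
    (G.faces.erase G.outer).card = 3 ^ (d + 1) := by
  induction d generalizing G with
  | zero =>
    rw [Finset.card_erase_of_mem G.outer_mem, h.2.1]; rfl
  | succ d ih =>
    obtain ⟨H, hH, hst⟩ := h
    rw [hst.card_inner_faces, ih hH, pow_succ 3 (d + 1), mul_comm]

theorem two_mul_card_verts {d : ℕ} {G : PlaneGraph} (h : IsCP3Tree d G) :
    2 * G.verts.card = 3 ^ (d + 1) + 5 := by
  induction d generalizing G with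
  | zero => rw [h.1]; rfl
  | succ d ih =>
    obtain ⟨H, hH, hst⟩ := h
    rw [hst.card_verts, mul_add, ih hH, hH.card_inner_faces, pow_succ 3 (d + 1)]
    ring

theorem pow_le_card_of_faceCover {d : ℕ} {G : PlaneGraph} (h : IsCP3Tree d G)
    {S : Finset ℕ} (hS : G.FaceCover S) : 3 ^ d ≤ S.card := by
  cases d with
  | zero =>
    have hV : G.verts.Nonempty := Finset.card_pos.mp (by rw [h.1]; norm_num)
    exact Finset.card_pos.mpr (hS.nonempty hV)
  | succ d =>
    obtain ⟨H, hH, hst⟩ := h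
    exact hH.card_inner_faces ▸ hst.card_inner_faces_le_of_faceCover hS

end IsCP3Tree

end PlaneGraph

/-- The complete planar 3-tree `T_d` has outerplane splitting
number at least `(2 n_d - 8)/3` where `n_d = |V(T_d)|`. -/
theorem stmt_16 (d : ℕ) (G : PlaneGraph) (hG : PlaneGraph.IsCP3Tree d G)
    (k : ℕ) (hk : G.OSN k) :
    (2 * (G.verts.card : ℚ) - 8) / 3 ≤ (k : ℚ) := by
  obtain ⟨S, hS, hcard⟩ := hk.exists_faceCover
  have hcover : (3 : ℚ) ^ d ≤ k + 1 := by
    exact_mod_cast (hG.pow_le_card_of_faceCover hS).trans hcard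
  have hverts : 2 * (G.verts.card : ℚ) = 3 * 3 ^ d + 5 := by
    rw [← pow_succ']
    exact_mod_cast hG.two_mul_card_verts
  rw [div_le_iff₀ three_pos]
  linarith
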